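/- arXiv:2107.03112 — 3 statements merged into one kernel-verified Lean document; each statement's English description precedes it below -/
import Mathlib

section
/- Let A be a real positive-definite matrix indexed by α ⊕ β with block decomposition A = fromBlocks A₁₁ A₁₂ A₂₁ A₂₂. Then for every real matrix F indexed by (α ⊕ β) × γ, writing F₁ and F₂ for its α-row block and β-row block respectively, and writing C = A⁻¹ * F (so C₁ is the α-row block of C), one has F₁ − A₁₂ * A₂₂⁻¹ * F₂ = ((A⁻¹)₁₁)⁻¹ * C₁, where (A⁻¹)₁₁ denotes the α × α block of A⁻¹. (This is the matrix-valued extended Rippa identity used in the proof of Theorem 3.1: the leave-α-out residual of each column of F equals the corresponding column of ((A⁻¹)₁₁)⁻¹ applied to the α-block of the coefficients A⁻¹F.) -/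
/-!
Since `F = A C`, blockwise `F₁ = A₁₁ C₁ + A₁₂ C₂` and `F₂ = A₂₁ C₁ + A₂₂ C₂`. Eliminating `C₂`
leaves `F₁ - A₁₂ A₂₂⁻¹ F₂ = S C₁` with `S = A₁₁ - A₁₂ A₂₂⁻¹ A₂₁` the Schur complement of `A₂₂`,
and the block inversion formula gives `(A⁻¹)₁₁ = S⁻¹`.
-/

open Matrix

namespace Matrix

variable {m n p R : Type*} [Fintype m] [Fintype n] [DecidableEq n] [CommRing R]

theorem inv_toBlocks₁₁_inv_fromBlocks [DecidableEq m] {A : Matrix m m R} {B : Matrix m n R}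
    {C : Matrix n m R} {D : Matrix n n R} (hM : IsUnit (fromBlocks A B C D).det)
    (hD : IsUnit D.det) :
    ((fromBlocks A B C D)⁻¹.toBlocks₁₁)⁻¹ = A - B * D⁻¹ * C := by
  let := invertibleOfIsUnitDet _ hM
  let := invertibleOfIsUnitDet _ hD
  let := invertibleOfFromBlocks₂₂Invertible A B C D
  rw [← invOf_eq_nonsing_inv (fromBlocks A B C D), invOf_fromBlocks₂₂_eq, toBlocks_fromBlocks₁₁,
    invOf_eq_nonsing_inv, inv_inv_of_invertible, invOf_eq_nonsing_inv]

theorem toRows₁_fromBlocks_mul_sub_eq_schur_mul {A : Matrix m m R} {B : Matrix m n R}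
    {C : Matrix n m R} {D : Matrix n n R} (hD : IsUnit D.det) (X : Matrix (m ⊕ n) p R) :
    (fromBlocks A B C D * X).toRows₁ - B * D⁻¹ * (fromBlocks A B C D * X).toRows₂ =
      (A - B * D⁻¹ * C) * X.toRows₁ := by
  rw [← fromRows_toRows X, fromBlocks_mul_fromRows, toRows₁_fromRows, toRows₂_fromRows,
    toRows₁_fromRows, Matrix.mul_add, Matrix.mul_assoc B D⁻¹ (D * _),
    nonsing_inv_mul_cancel_left _ _ hD, Matrix.sub_mul, Matrix.mul_assoc (B * D⁻¹) C]
  abel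

end Matrix

theorem erba_matrix_extended_rippa_general {α β γ : Type*} [Fintype α] [Fintype β]
    [DecidableEq α] [DecidableEq β]
    (A : Matrix (α ⊕ β) (α ⊕ β) ℝ)
    (A₁₁ : Matrix α α ℝ) (A₁₂ : Matrix α β ℝ) (A₂₁ : Matrix β α ℝ) (A₂₂ : Matrix β β ℝ)
    (hA : A.PosDef) (hblocks : A = Matrix.fromBlocks A₁₁ A₁₂ A₂₁ A₂₂)
    (F : Matrix (α ⊕ β) γ ℝ)
    (F₁ : Matrix α γ ℝ) (hF₁ : F₁ = F.submatrix Sum.inl id)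
    (F₂ : Matrix β γ ℝ) (hF₂ : F₂ = F.submatrix Sum.inr id)
    (C : Matrix (α ⊕ β) γ ℝ) (hC : C = A⁻¹ * F)
    (C₁ : Matrix α γ ℝ) (hC₁ : C₁ = C.submatrix Sum.inl id) :
    F₁ - A₁₂ * A₂₂⁻¹ * F₂ = ((A⁻¹).toBlocks₁₁)⁻¹ * C₁ := by
  have hA₂₂ : A₂₂.PosDef := by subst hblocks; exact hA.submatrix Sum.inr_injective
  have hF : F = A * C := by rw [hC, mul_nonsing_inv_cancel_left _ _ hA.det_pos.ne'.isUnit]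
  subst hF₁ hF₂ hC₁ hblocks
  rw [inv_toBlocks₁₁_inv_fromBlocks hA.det_pos.ne'.isUnit hA₂₂.det_pos.ne'.isUnit, hF]
  exact toRows₁_fromBlocks_mul_sub_eq_schur_mul hA₂₂.det_pos.ne'.isUnit C

/-- Matrix-valued extended Rippa identity: for a positive definite block matrix
`A = fromBlocks A₁₁ A₁₂ A₂₁ A₂₂` and any matrix `F` of data columns, the leave-α-out
residual `F₁ - A₁₂ A₂₂⁻¹ F₂` equals `((A⁻¹)₁₁)⁻¹ C₁` where `C = A⁻¹ F`. -/
theorem erba_matrix_extended_rippa {α β γ : Type*} [Fintype α] [Fintype β] [Fintype γ]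
    [DecidableEq α] [DecidableEq β] [DecidableEq γ]
    (A : Matrix (α ⊕ β) (α ⊕ β) ℝ)
    (A₁₁ : Matrix α α ℝ) (A₁₂ : Matrix α β ℝ) (A₂₁ : Matrix β α ℝ) (A₂₂ : Matrix β β ℝ)
    (hA : A.PosDef) (hblocks : A = Matrix.fromBlocks A₁₁ A₁₂ A₂₁ A₂₂)
    (F : Matrix (α ⊕ β) γ ℝ)
    (F₁ : Matrix α γ ℝ) (hF₁ : F₁ = F.submatrix Sum.inl id)
    (F₂ : Matrix β γ ℝ) (hF₂ : F₂ = F.submatrix Sum.inr id)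
    (C : Matrix (α ⊕ β) γ ℝ) (hC : C = A⁻¹ * F)
    (C₁ : Matrix α γ ℝ) (hC₁ : C₁ = C.submatrix Sum.inl id) :
    F₁ - A₁₂ * A₂₂⁻¹ * F₂ = ((A⁻¹).toBlocks₁₁)⁻¹ * C₁ :=
  erba_matrix_extended_rippa_general A A₁₁ A₁₂ A₂₁ A₂₂ hA hblocks F F₁ hF₁ F₂ hF₂ C hC C₁ hC₁
end

section
/- Let A be a real positive-definite matrix indexed by α ⊕ β with block decomposition A = fromBlocks A₁₁ A₁₂ A₂₁ A₂₂. For every vector f : (α ⊕ β) → ℝ with blocks f₁ : α → ℝ and f₂ : β → ℝ, let c = A⁻¹ ⬝ f with α-block c₁. Then the residual vector of the interpolant built on the β-nodes and evaluated at the α-nodes satisfies f₁ − A₁₂ ⬝ (A₂₂⁻¹ ⬝ f₂) = ((A⁻¹)₁₁)⁻¹ ⬝ c₁. (Extended Rippa's algorithm identity, equation (8) of the paper: the leave-V-out residual e_p = f_p − (c^(p))ᵀ k^p(V) equals ((A⁻¹)_{p,p})⁻¹ c_p.) -/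
/-!
Write `B = A⁻¹`. The `(1,2)` block of `B * A = 1` reads `B₁₁ A₁₂ + B₁₂ A₂₂ = 0`, so
`B₁₂ = -B₁₁ A₁₂ A₂₂⁻¹`. Substituting into `c₁ = B₁₁ f₁ + B₁₂ f₂` gives
`c₁ = B₁₁ (f₁ - A₁₂ A₂₂⁻¹ f₂)`, and positive definiteness makes `B₁₁` and `A₂₂` invertible.
-/

open Matrix

namespace Matrix

section Blocks

variable {l m n o R : Type*} [Fintype m] [Fintype n]

theorem mulVec_comp_inl [NonUnitalNonAssocSemiring R] (B : Matrix (l ⊕ o) (m ⊕ n) R)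
    (x : m ⊕ n → R) :
    (B *ᵥ x) ∘ Sum.inl = B.toBlocks₁₁ *ᵥ (x ∘ Sum.inl) + B.toBlocks₁₂ *ᵥ (x ∘ Sum.inr) := by
  conv_lhs => rw [← fromBlocks_toBlocks B, fromBlocks_mulVec]
  rfl

variable [DecidableEq m] [DecidableEq n] [CommRing R]

theorem toBlocks₁₂_eq_of_mul_fromBlocks_eq_one {B : Matrix (m ⊕ n) (m ⊕ n) R}
    {A₁₁ : Matrix m m R} {A₁₂ : Matrix m n R} {A₂₁ : Matrix n m R} {A₂₂ : Matrix n n R}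
    (hB : B * fromBlocks A₁₁ A₁₂ A₂₁ A₂₂ = 1) (hA₂₂ : IsUnit A₂₂.det) :
    B.toBlocks₁₂ = -(B.toBlocks₁₁ * A₁₂ * A₂₂⁻¹) := by
  have h₁₂ : B.toBlocks₁₁ * A₁₂ + B.toBlocks₁₂ * A₂₂ = 0 := by
    rw [← fromBlocks_toBlocks B, fromBlocks_multiply, ← fromBlocks_one] at hB
    exact congrArg toBlocks₁₂ hB
  rw [← mul_nonsing_inv_cancel_right A₂₂ B.toBlocks₁₂ hA₂₂, eq_neg_of_add_eq_zero_right h₁₂,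
    Matrix.neg_mul]

theorem inv_fromBlocks_mulVec_comp_inl {A₁₁ : Matrix m m R} {A₁₂ : Matrix m n R}
    {A₂₁ : Matrix n m R} {A₂₂ : Matrix n n R}
    (hA : IsUnit (fromBlocks A₁₁ A₁₂ A₂₁ A₂₂).det) (hA₂₂ : IsUnit A₂₂.det) (f : m ⊕ n → R) :
    ((fromBlocks A₁₁ A₁₂ A₂₁ A₂₂)⁻¹ *ᵥ f) ∘ Sum.inl =
      (fromBlocks A₁₁ A₁₂ A₂₁ A₂₂)⁻¹.toBlocks₁₁ *ᵥ
        (f ∘ Sum.inl - A₁₂ *ᵥ (A₂₂⁻¹ *ᵥ (f ∘ Sum.inr))) := by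
  rw [mulVec_comp_inl, toBlocks₁₂_eq_of_mul_fromBlocks_eq_one (nonsing_inv_mul _ hA) hA₂₂,
    mulVec_sub, neg_mulVec, mulVec_mulVec, mulVec_mulVec, Matrix.mul_assoc, sub_eq_add_neg]

end Blocks

theorem PosDef.toBlocks₁₁ {m n R : Type*} [Ring R] [PartialOrder R] [StarRing R]
    {A : Matrix (m ⊕ n) (m ⊕ n) R} (hA : A.PosDef) : A.toBlocks₁₁.PosDef :=
  hA.submatrix Sum.inl_injective

theorem PosDef.toBlocks₂₂ {m n R : Type*} [Ring R] [PartialOrder R] [StarRing R]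
    {A : Matrix (m ⊕ n) (m ⊕ n) R} (hA : A.PosDef) : A.toBlocks₂₂.PosDef :=
  hA.submatrix Sum.inr_injective

end Matrix

/-- Extended Rippa's algorithm identity (eq. (8) of the paper): for a positive definite
block matrix `A = fromBlocks A₁₁ A₁₂ A₂₁ A₂₂` and data vector `f`, the leave-V-out
residual `f₁ - A₁₂ A₂₂⁻¹ f₂` equals `((A⁻¹)₁₁)⁻¹ c₁` where `c = A⁻¹ f`. -/
theorem erba_extended_rippa {α β : Type*} [Fintype α] [Fintype β]
    [DecidableEq α] [DecidableEq β]
    (A : Matrix (α ⊕ β) (α ⊕ β) ℝ)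
    (A₁₁ : Matrix α α ℝ) (A₁₂ : Matrix α β ℝ) (A₂₁ : Matrix β α ℝ) (A₂₂ : Matrix β β ℝ)
    (hA : A.PosDef) (hblocks : A = Matrix.fromBlocks A₁₁ A₁₂ A₂₁ A₂₂)
    (f : (α ⊕ β) → ℝ)
    (f₁ : α → ℝ) (hf₁ : f₁ = f ∘ Sum.inl)
    (f₂ : β → ℝ) (hf₂ : f₂ = f ∘ Sum.inr)
    (c : (α ⊕ β) → ℝ) (hc : c = A⁻¹ *ᵥ f)
    (c₁ : α → ℝ) (hc₁ : c₁ = c ∘ Sum.inl) :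
    f₁ - A₁₂ *ᵥ (A₂₂⁻¹ *ᵥ f₂) = ((A⁻¹).toBlocks₁₁)⁻¹ *ᵥ c₁ := by
  subst hf₁ hf₂ hc hc₁
  have hA₂₂ : IsUnit A₂₂.det := by
    simpa [hblocks] using (isUnit_iff_isUnit_det _).mp hA.toBlocks₂₂.isUnit
  have hB₁₁ : IsUnit (A⁻¹).toBlocks₁₁.det :=
    (isUnit_iff_isUnit_det _).mp hA.inv.toBlocks₁₁.isUnit
  have hAdet : IsUnit A.det := (isUnit_iff_isUnit_det _).mp hA.isUnit
  have hc₁ := hblocks ▸ inv_fromBlocks_mulVec_comp_inl (hblocks ▸ hAdet) hA₂₂ f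
  rw [hc₁, mulVec_mulVec _ (A⁻¹.toBlocks₁₁)⁻¹, nonsing_inv_mul _ hB₁₁, one_mulVec]
end

section
/- Let A be a real positive-definite matrix indexed by α ⊕ β with block decomposition A = fromBlocks A₁₁ A₁₂ A₂₁ A₂₂, and let k : (α ⊕ β) → ℝ be a vector with blocks k₁ : α → ℝ and k₂ : β → ℝ. Then k₁ᵀ ⬝ A₁₁⁻¹ ⬝ k₁ ≤ kᵀ ⬝ A⁻¹ ⬝ k, i.e. the quadratic form of the inverse of a principal submatrix applied to the corresponding subvector is at most the quadratic form of the full inverse. Consequently, for any real number κ₀, one has κ₀ − kᵀ A⁻¹ k ≤ κ₀ − k₁ᵀ A₁₁⁻¹ k₁: the squared power function value at a point does not increase when nodes are added to (equivalently, does not decrease when nodes are removed from) the interpolation set, which is the pointwise monotonicity ‖P_{κ, X_{s-1}}‖_∞ ≤ ‖P_{κ, X_s}‖_∞ for nested node sets X_s ⊂ X_{s-1} that guarantees convergence of the power-based reduced basis scheme. -/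
/-!
Completing the square, `kᵀA⁻¹k = max_x (2 kᵀx - xᵀAx)` for positive definite `A`, the maximum
being attained at `x = A⁻¹k`. Restricting the maximum to vectors `x` supported on the `α`-block
gives `k₁ᵀA₁₁⁻¹k₁`, which therefore cannot exceed `kᵀA⁻¹k`.
-/

open Matrix

namespace Matrix.PosDef

variable {m n K : Type*} [Fintype m] [Fintype n] [DecidableEq m] [DecidableEq n]
  [Field K] [LinearOrder K] [IsStrictOrderedRing K] [StarRing K] [TrivialStar K]

theorem two_mul_dotProduct_sub_dotProduct_mulVec_le {A : Matrix n n K} (hA : A.PosDef)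
    (k x : n → K) :
    2 * (k ⬝ᵥ x) - x ⬝ᵥ (A *ᵥ x) ≤ k ⬝ᵥ (A⁻¹ *ᵥ k) := by
  set y := A⁻¹ *ᵥ k
  have hAy : A *ᵥ y = k := by
    rw [mulVec_mulVec, mul_nonsing_inv _ ((isUnit_iff_isUnit_det A).mp hA.isUnit), one_mulVec]
  have hyAx : y ⬝ᵥ (A *ᵥ x) = k ⬝ᵥ x := by
    rw [dotProduct_mulVec, ← mulVec_transpose, (isHermitian_iff_isSymm.mp hA.isHermitian).eq, hAy]
  have hsq : 0 ≤ (x - y) ⬝ᵥ (A *ᵥ (x - y)) := by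
    simpa using hA.posSemidef.dotProduct_mulVec_nonneg (x - y)
  have hexpand : (x - y) ⬝ᵥ (A *ᵥ (x - y)) =
      x ⬝ᵥ (A *ᵥ x) - 2 * (k ⬝ᵥ x) + k ⬝ᵥ y := by
    rw [mulVec_sub, hAy, sub_dotProduct, dotProduct_sub, dotProduct_sub, hyAx,
      dotProduct_comm x k, dotProduct_comm y k]
    ring
  linarith

theorem vecMul_dotProduct_inv_mulVec_vecMul_le {A : Matrix n n K} (hA : A.PosDef)
    (B : Matrix n m K) (hB : IsUnit (Bᵀ * A * B)) (k : n → K) :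
    (k ᵥ* B) ⬝ᵥ ((Bᵀ * A * B)⁻¹ *ᵥ (k ᵥ* B)) ≤ k ⬝ᵥ (A⁻¹ *ᵥ k) := by
  set c := k ᵥ* B
  set w := (Bᵀ * A * B)⁻¹ *ᵥ c
  have hCw : (Bᵀ * A * B) *ᵥ w = c := by
    rw [mulVec_mulVec, mul_nonsing_inv _ ((isUnit_iff_isUnit_det _).mp hB), one_mulVec]
  have hlin : k ⬝ᵥ (B *ᵥ w) = c ⬝ᵥ w := dotProduct_mulVec k B w
  have hquad : (B *ᵥ w) ⬝ᵥ (A *ᵥ (B *ᵥ w)) = c ⬝ᵥ w := by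
    calc (B *ᵥ w) ⬝ᵥ (A *ᵥ (B *ᵥ w)) = (w ᵥ* Bᵀ) ⬝ᵥ ((A * B) *ᵥ w) := by
          rw [vecMul_transpose, mulVec_mulVec w A B]
      _ = w ⬝ᵥ ((Bᵀ * A * B) *ᵥ w) := by
          rw [← dotProduct_mulVec, mulVec_mulVec w Bᵀ (A * B), Matrix.mul_assoc]
      _ = c ⬝ᵥ w := by rw [hCw, dotProduct_comm]
  have hmax := hA.two_mul_dotProduct_sub_dotProduct_mulVec_le k (B *ᵥ w)
  rw [hlin, hquad] at hmax
  linarith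

theorem dotProduct_submatrix_inv_mulVec_le {A : Matrix n n K} (hA : A.PosDef) {e : m → n}
    (he : Function.Injective e) (k : n → K) :
    (k ∘ e) ⬝ᵥ ((A.submatrix e e)⁻¹ *ᵥ (k ∘ e)) ≤ k ⬝ᵥ (A⁻¹ *ᵥ k) := by
  have hsub : ((1 : Matrix n n K).submatrix id e)ᵀ * A * (1 : Matrix n n K).submatrix id e =
      A.submatrix e e := by
    ext i j
    simp [mul_apply, one_apply]
  have hk : k ᵥ* (1 : Matrix n n K).submatrix id e = k ∘ e := by
    ext i
    simp [vecMul, dotProduct, one_apply]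
  rw [← hsub, ← hk]
  exact hA.vecMul_dotProduct_inv_mulVec_vecMul_le _ (hsub ▸ (hA.submatrix he).isUnit) k

end Matrix.PosDef

/-- Monotonicity of the (squared) power function under node removal: for a positive
definite block matrix `A = fromBlocks A₁₁ A₁₂ A₂₁ A₂₂` and any kernel-evaluation
vector `k` with α-block `k₁`, one has `k₁ᵀ A₁₁⁻¹ k₁ ≤ kᵀ A⁻¹ k`, and hence
`κ₀ - kᵀ A⁻¹ k ≤ κ₀ - k₁ᵀ A₁₁⁻¹ k₁` for every `κ₀`. -/
theorem erba_power_function_monotone {α β : Type*} [Fintype α] [Fintype β]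
    [DecidableEq α] [DecidableEq β]
    (A : Matrix (α ⊕ β) (α ⊕ β) ℝ)
    (A₁₁ : Matrix α α ℝ) (A₁₂ : Matrix α β ℝ) (A₂₁ : Matrix β α ℝ) (A₂₂ : Matrix β β ℝ)
    (hA : A.PosDef) (hblocks : A = Matrix.fromBlocks A₁₁ A₁₂ A₂₁ A₂₂)
    (k : (α ⊕ β) → ℝ) (k₁ : α → ℝ) (hk₁ : k₁ = k ∘ Sum.inl) :
    k₁ ⬝ᵥ (A₁₁⁻¹ *ᵥ k₁) ≤ k ⬝ᵥ (A⁻¹ *ᵥ k) ∧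
      ∀ κ₀ : ℝ, κ₀ - k ⬝ᵥ (A⁻¹ *ᵥ k) ≤ κ₀ - k₁ ⬝ᵥ (A₁₁⁻¹ *ᵥ k₁) := by
  have hA₁₁ : A.submatrix Sum.inl Sum.inl = A₁₁ := by
    rw [hblocks]
    rfl
  have hle := hA.dotProduct_submatrix_inv_mulVec_le Sum.inl_injective k
  rw [hA₁₁, ← hk₁] at hle
  exact ⟨hle, fun κ₀ => sub_le_sub_left hle κ₀⟩
end
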